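/- Contraction of the full-drop lifted matrix (Lemma 1(c)): let A_1, B_1 be full-drop AIMD matrices with e^T x = 0 implying ||A_1 x||_1 ≤ β_a ||x||_1 and ||B_1 x||_1 ≤ β_b ||x||_1, β_a, β_b ∈ (0,1). Let γ_{1a} have k-th block of its first block column equal to (1/k) Σ_{i=0}^{k-1} A_1^{N-i} (similarly γ_{1b} with B_1), and Γ_1 = diag(γ_{1a}, γ_{1b}). Then for all ζ ∈ E (i.e., e^T z_{a,1} = e^T z_{b,1} = 0), ||Γ_1 ζ||_{N,1} ≤ q ||ζ||_{N,1} with q = max((1/N) Σ_{i=1}^N β_a^i, (1/N) Σ_{j=1}^N β_b^j) < 1. -/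

import Mathlib

/-!
On zero-sum vectors the column-stochastic matrix `C` keeps the sum zero, so the
one-step contraction iterates: `‖Cᵐ x‖₁ ≤ βᵐ ‖x‖₁`. The `k`-th block of `Γ₁ ζ` is the
average of `C^N x, …, C^(N-k) x` with `x` the zero-sum first block of `ζ`, so its
1-norm is at most the average of `β^(N-k), …, β^N` times `‖x‖₁`. These are the `k + 1`
smallest of the powers `β, …, β^N`, so their average is at most the average
`(1/N) ∑_{i=1}^N βⁱ` of all of them.
-/

open Finset Matrix

/-- Prefix averages of a monotone sequence increase. -/
theorem Monotone.mul_sum_range_le_mul_sum_range {a : ℕ → ℝ} (ha : Monotone a) {k m : ℕ}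
    (hkm : k ≤ m) : (m : ℝ) * ∑ j ∈ range k, a j ≤ k * ∑ j ∈ range m, a j := by
  induction m, hkm using Nat.le_induction with
  | base => rw [mul_comm]
  | succ m hkm ih =>
    have hprefix : ∑ j ∈ range k, a j ≤ k * a m := by
      simpa using sum_le_card_nsmul (range k) a (a m)
        fun j hj => ha (by have := mem_range.1 hj; omega)
    rw [sum_range_succ]
    push_cast
    linarith

theorem one_div_succ_mul_sum_pow_sub_le {β : ℝ} (hβ : 0 ≤ β) (hβ1 : β ≤ 1) {N k : ℕ}
    (hkN : k < N) :
    1 / ((k : ℝ) + 1) * ∑ j ∈ range (k + 1), β ^ (N - j)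
      ≤ 1 / (N : ℝ) * ∑ i ∈ Icc 1 N, β ^ i := by
  have hpowers : ∑ i ∈ Icc 1 N, β ^ i = ∑ j ∈ range N, β ^ (N - j) := by
    rw [← sum_range_reflect, ← Ico_add_one_right_eq_Icc, sum_Ico_eq_sum_range]
    exact sum_congr (by simp) fun j hj => by grind
  have hmono : Monotone fun j => β ^ (N - j) := fun i j hij =>
    pow_le_pow_of_le_one hβ hβ1 (by omega)
  have hprefix := hmono.mul_sum_range_le_mul_sum_range hkN
  push_cast at hprefix
  rw [hpowers, div_mul_eq_mul_div, div_mul_eq_mul_div,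
    div_le_div_iff₀ (by positivity) (by exact_mod_cast k.zero_le.trans_lt hkN)]
  linarith

section Contraction

variable {ι : Type*} [Fintype ι]

theorem sum_mulVec_of_sum_col_eq_one {M : Matrix ι ι ℝ} (hM : ∀ j, ∑ i, M i j = 1)
    (x : ι → ℝ) : ∑ i, (M *ᵥ x) i = ∑ i, x i := by
  simp only [mulVec, dotProduct]
  rw [sum_comm]
  simp [← sum_mul, hM]

variable [DecidableEq ι] {C : Matrix ι ι ℝ} {β : ℝ}

theorem sum_abs_pow_mulVec_le (hβ : 0 ≤ β) (hcs : ∀ j, ∑ i, C i j = 1)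
    (hcontr : ∀ x : ι → ℝ, ∑ i, x i = 0 → ∑ i, |(C *ᵥ x) i| ≤ β * ∑ i, |x i|)
    (m : ℕ) {x : ι → ℝ} (hx : ∑ i, x i = 0) :
    ∑ i, |(C ^ m *ᵥ x) i| ≤ β ^ m * ∑ i, |x i| := by
  induction m generalizing x with
  | zero => simp
  | succ m ih =>
    calc ∑ i, |(C ^ (m + 1) *ᵥ x) i| = ∑ i, |(C ^ m *ᵥ (C *ᵥ x)) i| := by
          rw [mulVec_mulVec, pow_succ]
      _ ≤ β ^ m * ∑ i, |(C *ᵥ x) i| := ih (by rwa [sum_mulVec_of_sum_col_eq_one hcs])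
      _ ≤ β ^ m * (β * ∑ i, |x i|) := by gcongr; exact hcontr x hx
      _ = β ^ (m + 1) * ∑ i, |x i| := by ring

theorem sum_abs_avg_pow_mulVec_le (hβ : 0 ≤ β) (hβ1 : β ≤ 1) (hcs : ∀ j, ∑ i, C i j = 1)
    (hcontr : ∀ x : ι → ℝ, ∑ i, x i = 0 → ∑ i, |(C *ᵥ x) i| ≤ β * ∑ i, |x i|)
    {N k : ℕ} (hkN : k < N) {x : ι → ℝ} (hx : ∑ i, x i = 0) :
    ∑ i, |(((1 / ((k : ℝ) + 1)) • ∑ j ∈ range (k + 1), C ^ (N - j)) *ᵥ x) i|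
      ≤ 1 / (N : ℝ) * (∑ i ∈ Icc 1 N, β ^ i) * ∑ i, |x i| := by
  have hk : (0 : ℝ) < 1 / ((k : ℝ) + 1) := by positivity
  calc ∑ i, |(((1 / ((k : ℝ) + 1)) • ∑ j ∈ range (k + 1), C ^ (N - j)) *ᵥ x) i|
      = 1 / ((k : ℝ) + 1) * ∑ i, |∑ j ∈ range (k + 1), (C ^ (N - j) *ᵥ x) i| := by
        rw [smul_mulVec, sum_mulVec, mul_sum]
        refine sum_congr rfl fun i _ => ?_
        rw [Pi.smul_apply, smul_eq_mul, abs_mul, abs_of_pos hk, Finset.sum_apply]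
    _ ≤ 1 / ((k : ℝ) + 1) * ∑ j ∈ range (k + 1), ∑ i, |(C ^ (N - j) *ᵥ x) i| := by
        rw [sum_comm]
        gcongr
        exact abs_sum_le_sum_abs _ _
    _ ≤ 1 / ((k : ℝ) + 1) * ∑ j ∈ range (k + 1), β ^ (N - j) * ∑ i, |x i| := by
        gcongr
        exact sum_abs_pow_mulVec_le hβ hcs hcontr _ hx
    _ = 1 / ((k : ℝ) + 1) * (∑ j ∈ range (k + 1), β ^ (N - j)) * ∑ i, |x i| := by
        rw [← sum_mul, mul_assoc]
    _ ≤ 1 / (N : ℝ) * (∑ i ∈ Icc 1 N, β ^ i) * ∑ i, |x i| :=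
        mul_le_mul_of_nonneg_right (one_div_succ_mul_sum_pow_sub_le hβ hβ1 hkN)
          (sum_nonneg fun i _ => abs_nonneg _)

end Contraction

/-- Here `C 0 = A₁`, `C 1 = B₁`, and the summand for `p = (c, k)` is the 1-norm of
block `(c, k)` of `Γ₁ ζ`. -/
theorem lifted_fullDrop_contracts_general (n N : ℕ) [NeZero N]
    (C : Fin 2 → Matrix (Fin n) (Fin n) ℝ) (β : Fin 2 → ℝ)
    (hβ : ∀ c, 0 < β c ∧ β c < 1)
    (hcs : ∀ c j, ∑ i, C c i j = 1)
    (hcontr : ∀ c (x : Fin n → ℝ), ∑ i, x i = 0 →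
      ∑ i, |(C c).mulVec x i| ≤ β c * ∑ i, |x i|)
    (ζ : Fin 2 → Fin N → Fin n → ℝ)
    (hζE : ∀ c, ∑ i, ζ c 0 i = 0) :
    (Finset.univ.sup' Finset.univ_nonempty
        (fun p : Fin 2 × Fin N =>
          ∑ i, |((1 / ((p.2 : ℕ) + 1 : ℝ)) •
            ∑ j ∈ Finset.range ((p.2 : ℕ) + 1), (C p.1 ^ (N - j))).mulVec (ζ p.1 0) i|))
      ≤ (max ((1 / (N : ℝ)) * ∑ i ∈ Finset.Icc 1 N, β 0 ^ i)
             ((1 / (N : ℝ)) * ∑ j ∈ Finset.Icc 1 N, β 1 ^ j)) *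
        Finset.univ.sup' Finset.univ_nonempty
          (fun p : Fin 2 × Fin N => ∑ i, |ζ p.1 p.2 i|) := by
  refine sup'_le _ _ fun ⟨c, k⟩ _ => ?_
  have hblock := sum_abs_avg_pow_mulVec_le (hβ c).1.le (hβ c).2.le (hcs c) (hcontr c) k.isLt (hζE c)
  refine hblock.trans (mul_le_mul ?_ ?_ (by positivity) ?_)
  · fin_cases c
    exacts [le_max_left _ _, le_max_right _ _]
  · exact le_sup' (fun p : Fin 2 × Fin N => ∑ i, |ζ p.1 p.2 i|) (mem_univ (c, 0))
  · exact (mul_nonneg (by positivity) (sum_nonneg fun i _ => pow_nonneg (hβ 0).1.le i)).trans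
      (le_max_left _ _)

/-- Contraction of the full-drop lifted matrix (Lemma 1(c)). The block `(c,k)` of
`Γ₁ ζ` is `(1/(k+1)) ∑_{i=0}^{k} (C c)^(N-i) *ᵥ (ζ c 0)`, where `C 0 = A₁`, `C 1 = B₁`
are the full-drop matrices.  On the subspace `E` the block-max of 1-norms contracts
by `q = max((1/N)∑_{i=1}^N βₐⁱ, (1/N)∑_{j=1}^N β_bʲ) < 1`. -/
theorem lifted_fullDrop_contracts (n N : ℕ) [NeZero N]
    (C : Fin 2 → Matrix (Fin n) (Fin n) ℝ) (β : Fin 2 → ℝ)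
    (hβ : ∀ c, 0 < β c ∧ β c < 1)
    (hnn : ∀ c i j, 0 ≤ C c i j) (hcs : ∀ c j, ∑ i, C c i j = 1)
    (hcontr : ∀ c (x : Fin n → ℝ), ∑ i, x i = 0 →
      ∑ i, |(C c).mulVec x i| ≤ β c * ∑ i, |x i|)
    (ζ : Fin 2 → Fin N → Fin n → ℝ)
    (hζE : ∀ c, ∑ i, ζ c 0 i = 0) :
    (Finset.univ.sup' Finset.univ_nonempty
        (fun p : Fin 2 × Fin N =>
          ∑ i, |((1 / ((p.2 : ℕ) + 1 : ℝ)) •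
            ∑ j ∈ Finset.range ((p.2 : ℕ) + 1), (C p.1 ^ (N - j))).mulVec (ζ p.1 0) i|))
      ≤ (max ((1 / (N : ℝ)) * ∑ i ∈ Finset.Icc 1 N, β 0 ^ i)
             ((1 / (N : ℝ)) * ∑ j ∈ Finset.Icc 1 N, β 1 ^ j)) *
        Finset.univ.sup' Finset.univ_nonempty
          (fun p : Fin 2 × Fin N => ∑ i, |ζ p.1 p.2 i|) :=
  lifted_fullDrop_contracts_general n N C β hβ hcs hcontr ζ hζE
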